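/- arXiv:1903.06412 — 6 statements merged into one kernel-verified Lean document; each statement's English description precedes it below -/
import Mathlib

section
/- For any vector α in F_q^n with exactly k nonzero coordinates, there exists at least one consecutive partition (J, J̄) of [n] (where J consists of cyclically consecutive ⌈n/2⌉ coordinates) such that α restricted to J has exactly ⌈k/2⌉ nonzero coordinates and α restricted to J̄ has exactly ⌊k/2⌋ nonzero coordinates. -/
/-!
Let `f i` count the nonzero coordinates of `α` in the window of `m = ⌈n/2⌉` cyclically consecutive
coordinates starting at `i`. Shifting the window by one adds at most one coordinate, so
`f (i + 1) ≤ f i + 1`. The windows starting at `0` and at `m` cover the cycle and share at most the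
coordinate `0`, so `k ≤ f 0 + f m ≤ k + 1`, and `⌈k/2⌉` lies between `f 0` and `f m`. Walking around
the cycle from the smaller value to the larger one, `f` cannot skip `⌈k/2⌉`; the complementary
window then holds the remaining `⌊k/2⌋` nonzero coordinates.
-/

open Finset

namespace Fin

variable {n : ℕ}

lemma val_sub_eq_ite (a b : Fin n) :
    ((a - b : Fin n) : ℕ) = if b ≤ a then (a : ℕ) - b else n + a - b := by
  split_ifs with h
  · exact sub_val_of_le h
  · exact coe_sub_iff_lt.2 (not_le.1 h)

lemma exists_apply_eq_of_apply_add_one_le {f : Fin (n + 1) → ℕ} (hf : ∀ i, f (i + 1) ≤ f i + 1)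
    {a b : Fin (n + 1)} {t : ℕ} (ha : f a ≤ t) (hb : t ≤ f b) : ∃ i, f i = t := by
  suffices ∀ d : ℕ, ∀ b : Fin (n + 1), ((b - a : Fin (n + 1)) : ℕ) = d → t ≤ f b → ∃ i, f i = t
    from this _ b rfl hb
  intro d
  induction d with
  | zero =>
    intro b hd hb
    obtain rfl : b = a := sub_eq_zero.1 (Fin.ext hd)
    exact ⟨b, le_antisymm ha hb⟩
  | succ d ih =>
    intro b hd hb
    by_cases hprev : t ≤ f (b - 1)
    · refine ih (b - 1) ?_ hprev
      rw [sub_right_comm, coe_sub_one, if_neg fun h => by simp [h] at hd]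
      omega
    · have := sub_add_cancel b 1 ▸ hf (b - 1)
      exact ⟨b, by omega⟩

end Fin

section CyclicWindow

variable {n : ℕ}

def cyclicWindow (m : ℕ) (i : Fin n) : Finset (Fin n) := {j | ((j - i : Fin n) : ℕ) < m}

@[simp]
lemma mem_cyclicWindow {m : ℕ} {i j : Fin n} :
    j ∈ cyclicWindow m i ↔ ((j - i : Fin n) : ℕ) < m := by
  simp [cyclicWindow]

lemma cyclicWindow_add_one_subset (m : ℕ) (i : Fin (n + 1)) :
    cyclicWindow m (i + 1) ⊆
      cyclicWindow m i ∪ ({j | ((j - i : Fin (n + 1)) : ℕ) = m} : Finset _) := by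
  intro j hj
  rw [mem_cyclicWindow, ← sub_sub, Fin.coe_sub_one] at hj
  simp only [mem_union, mem_cyclicWindow, mem_filter, mem_univ, true_and]
  split_ifs at hj with h
  · left; rw [h, Fin.val_zero]; omega
  · omega

lemma card_filter_cyclicWindow_add_one_le (p : Fin (n + 1) → Prop) [DecidablePred p] (m : ℕ)
    (i : Fin (n + 1)) :
    #((cyclicWindow m (i + 1)).filter p) ≤ #((cyclicWindow m i).filter p) + 1 := by
  have hsingle : #({j | ((j - i : Fin (n + 1)) : ℕ) = m} : Finset (Fin (n + 1))) ≤ 1 :=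
    card_le_one.2 fun a ha b hb => by
      simp only [mem_filter, mem_univ, true_and] at ha hb
      exact sub_left_inj.1 (Fin.ext (ha.trans hb.symm))
  calc #((cyclicWindow m (i + 1)).filter p)
      ≤ #((cyclicWindow m i ∪ ({j | ((j - i : Fin (n + 1)) : ℕ) = m} : Finset _)).filter p) :=
        card_le_card (filter_subset_filter p (cyclicWindow_add_one_subset m i))
    _ ≤ #((cyclicWindow m i).filter p) + #({j | ((j - i : Fin (n + 1)) : ℕ) = m} : Finset _) := by
        rw [filter_union]
        exact (card_union_le _ _).trans (by gcongr; exact filter_subset p _)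
    _ ≤ _ := by omega

lemma cyclicWindow_zero_union_ofNat {m : ℕ} (hm : n + 1 ≤ 2 * m) :
    cyclicWindow m 0 ∪ cyclicWindow m (Fin.ofNat (n + 1) m) = univ := by
  refine eq_univ_of_forall fun j => ?_
  have hj := j.isLt
  simp only [mem_union, mem_cyclicWindow, sub_zero, Fin.val_sub_eq_ite, Fin.le_def,
    Fin.val_ofNat]
  by_cases hjm : (j : ℕ) < m
  · exact Or.inl hjm
  · rw [Nat.mod_eq_of_lt (by omega)]
    split_ifs <;> omega

lemma cyclicWindow_zero_inter_ofNat_subset {m : ℕ} (hm : 2 * m ≤ n + 2) :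
    cyclicWindow m 0 ∩ cyclicWindow m (Fin.ofNat (n + 1) m) ⊆ {0} := by
  intro j
  have hj := j.isLt
  simp only [mem_inter, mem_cyclicWindow, sub_zero, Fin.val_sub_eq_ite, Fin.le_def,
    Fin.val_ofNat, mem_singleton, Fin.ext_iff, Fin.val_zero]
  rintro ⟨hj0, hjc⟩
  rcases lt_or_ge n m with hnm | hmn
  · omega
  · rw [Nat.mod_eq_of_lt (by omega)] at hjc
    split_ifs at hjc <;> omega

lemma card_filter_le_card_filter_cyclicWindow_zero_add_ofNat (p : Fin (n + 1) → Prop)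
    [DecidablePred p] {m : ℕ} (hm : n + 1 ≤ 2 * m) :
    #(univ.filter p) ≤
      #((cyclicWindow m 0).filter p) + #((cyclicWindow m (Fin.ofNat (n + 1) m)).filter p) := by
  rw [← cyclicWindow_zero_union_ofNat hm, filter_union]
  exact card_union_le _ _

lemma card_filter_cyclicWindow_zero_add_ofNat_le (p : Fin (n + 1) → Prop) [DecidablePred p]
    {m : ℕ} (hm : 2 * m ≤ n + 2) :
    #((cyclicWindow m 0).filter p) + #((cyclicWindow m (Fin.ofNat (n + 1) m)).filter p) ≤
      #(univ.filter p) + 1 := by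
  calc _ = #((cyclicWindow m 0).filter p ∪ (cyclicWindow m (Fin.ofNat (n + 1) m)).filter p) +
        #((cyclicWindow m 0).filter p ∩ (cyclicWindow m (Fin.ofNat (n + 1) m)).filter p) :=
        (card_union_add_card_inter _ _).symm
    _ ≤ #(univ.filter p) + #({0} : Finset (Fin (n + 1))) := by
        rw [← filter_union, ← filter_inter_distrib]
        exact add_le_add (card_le_card (filter_subset_filter p (subset_univ _)))
          (card_le_card ((filter_subset p _).trans (cyclicWindow_zero_inter_ofNat_subset hm)))
    _ = #(univ.filter p) + 1 := by rw [card_singleton]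

end CyclicWindow

/-- For any `α ∈ F_q^n` with exactly `k` nonzero coordinates, there exists a
consecutive partition `(J, J̄)` of `[n]` (where `J` is a set of cyclically consecutive
`⌈n/2⌉` coordinates, here described as those `j` with `(j - i).val < ⌈n/2⌉` for a starting
index `i`) such that `α` has exactly `⌈k/2⌉` nonzero coordinates in `J` and exactly
`⌊k/2⌋` nonzero coordinates in `J̄`. -/
theorem stmt_0 {F : Type*} [Field F] [DecidableEq F] {n k : ℕ} (hn : 0 < n)
    (α : Fin n → F) (hw : (Finset.univ.filter fun i => α i ≠ 0).card = k) :
    ∃ i : Fin n,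
      ((Finset.univ.filter fun j : Fin n => ((j - i : Fin n) : ℕ) < (n + 1) / 2).filter
          fun j => α j ≠ 0).card = (k + 1) / 2 ∧
      ((Finset.univ.filter fun j : Fin n => ¬ ((j - i : Fin n) : ℕ) < (n + 1) / 2).filter
          fun j => α j ≠ 0).card = k / 2 := by
  obtain ⟨n, rfl⟩ := Nat.exists_eq_add_one_of_ne_zero hn.ne'
  set m := (n + 1 + 1) / 2
  set c : Fin (n + 1) := Fin.ofNat (n + 1) m
  set f : Fin (n + 1) → ℕ := fun i => #((cyclicWindow m i).filter fun j => α j ≠ 0)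
  have hcompl (i : Fin (n + 1)) :
      f i + #((univ.filter fun j : Fin (n + 1) => ¬ ((j - i : Fin (n + 1)) : ℕ) < m).filter
        fun j => α j ≠ 0) = k := by
    have := card_filter_add_card_filter_not (s := univ.filter fun j => α j ≠ 0)
      fun j : Fin (n + 1) => ((j - i : Fin (n + 1)) : ℕ) < m
    rwa [filter_comm, filter_comm (fun j => α j ≠ 0), hw] at this
  have hlow : k ≤ f 0 + f c :=
    hw ▸ card_filter_le_card_filter_cyclicWindow_zero_add_ofNat _ (by omega)
  have hup : f 0 + f c ≤ k + 1 :=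
    hw ▸ card_filter_cyclicWindow_zero_add_ofNat_le _ (by omega)
  have hstep : ∀ i, f (i + 1) ≤ f i + 1 := card_filter_cyclicWindow_add_one_le _ m
  obtain ⟨i, hi⟩ : ∃ i, f i = (k + 1) / 2 := by
    rcases le_total (f 0) (f c) with h | h
    · exact Fin.exists_apply_eq_of_apply_add_one_le hstep (a := 0) (b := c)
        (by omega) (by omega)
    · exact Fin.exists_apply_eq_of_apply_add_one_le hstep (a := c) (b := 0)
        (by omega) (by omega)
  exact ⟨i, hi, by have := hcompl i; omega⟩
end

section
/- For any function f : F_q^n → F_q, any p^(ℓ-1) distinct nonzero elements c_1, ..., c_{p^{ℓ-1}} of F_q, and any coordinate i relevant for f, there exists j ∈ [p^{ℓ-1}] such that i is also relevant for the function Tr(c_j · f) : F_q^n → F_p. -/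
/-!
Let `x, y` differ only at `i` with `f x ≠ f y`, and put `a = f x - f y ≠ 0`. Then
`Tr (c * f x) = Tr (c * f y)` exactly when `c` lies in the kernel of the `F_p`-linear functional
`c ↦ Tr (c * a)`, which is onto because the trace is. That kernel is therefore a hyperplane with
`p ^ (ℓ - 1)` points, one of which is `0`, so it cannot contain all `p ^ (ℓ - 1)` nonzero `c_j`.
-/

theorem LinearMap.card_ker_mul_card_of_surjective {R M M' : Type*} [Ring R] [AddCommGroup M]
    [AddCommGroup M'] [Module R M] [Module R M'] (ψ : M →ₗ[R] M') (hψ : Function.Surjective ψ) :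
    Nat.card (LinearMap.ker ψ) * Nat.card M' = Nat.card M := by
  rw [(LinearMap.ker ψ).card_eq_card_quotient_mul_card,
    Nat.card_congr (ψ.quotKerEquivOfSurjective hψ).toEquiv]

section TraceMul

variable (K : Type*) {L : Type*} [Field K] [Field L] [Finite L] [Algebra K L]

theorem Algebra.trace_comp_mulRight_surjective {a : L} (ha : a ≠ 0) :
    Function.Surjective ((Algebra.trace K L).comp (LinearMap.mulRight K a)) := by
  have : Finite K := Finite.of_injective _ (algebraMap K L).injective
  exact (Algebra.trace_surjective K L).comp (mulRight_bijective₀ a ha).surjective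

theorem Algebra.card_ker_trace_comp_mulRight {a : L} (ha : a ≠ 0) :
    Nat.card (LinearMap.ker ((Algebra.trace K L).comp (LinearMap.mulRight K a))) * Nat.card K =
      Nat.card L :=
  LinearMap.card_ker_mul_card_of_surjective _ (Algebra.trace_comp_mulRight_surjective K ha)

theorem Algebra.exists_trace_mul_ne_zero {ι : Type*} [Finite ι] {c : ι → L}
    (hinj : Function.Injective c) (hc0 : ∀ j, c j ≠ 0)
    (hcard : Nat.card L ≤ Nat.card ι * Nat.card K) {a : L} (ha : a ≠ 0) :
    ∃ j, Algebra.trace K L (c j * a) ≠ 0 := by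
  by_contra! hker
  set H := LinearMap.ker ((Algebra.trace K L).comp (LinearMap.mulRight K a))
  let embed : Option ι → H := fun o => o.elim 0 fun j => ⟨c j, hker j⟩
  have he : Function.Injective embed := by
    rintro (_ | j) (_ | j') h <;> simp only [embed, Option.elim, Subtype.ext_iff] at h
    · rfl
    · exact absurd h.symm (hc0 j')
    · exact absurd h (hc0 j)
    · rw [hinj h]
  have hle : Nat.card ι + 1 ≤ Nat.card H := by
    simpa [Nat.card_eq_fintype_card] using Nat.card_le_card_of_injective embed he
  have hK : 0 < Nat.card K :=
    Nat.card_pos_iff.mpr ⟨⟨0⟩, Finite.of_injective _ (algebraMap K L).injective⟩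
  have hHι : Nat.card H * Nat.card K ≤ Nat.card ι * Nat.card K :=
    (Algebra.card_ker_trace_comp_mulRight K ha).trans_le hcard
  have := Nat.le_of_mul_le_mul_right hHι hK
  omega

end TraceMul

/-- For any `f : F_q^n → F_q` (where `q = p^ℓ`), any `p^(ℓ-1)` distinct nonzero
elements `c_1, …, c_{p^{ℓ-1}}` of `F_q`, and any coordinate `i` relevant for `f`, there is `j`
such that `i` is relevant for `Tr(c_j · f) : F_q^n → F_p`. Relevance of `i` for `g` means there
are inputs `x, y` differing only at coordinate `i` with `g x ≠ g y`. -/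
theorem stmt_1 (p ℓ n : ℕ) [Fact p.Prime] {F : Type*} [Field F] [Fintype F]
    [Algebra (ZMod p) F] (hq : Fintype.card F = p ^ ℓ)
    (f : (Fin n → F) → F) (c : Fin (p ^ (ℓ - 1)) → F)
    (hinj : Function.Injective c) (hc0 : ∀ j, c j ≠ 0)
    (i : Fin n)
    (hrel : ∃ x y : Fin n → F, (∀ j, j ≠ i → x j = y j) ∧ f x ≠ f y) :
    ∃ j : Fin (p ^ (ℓ - 1)), ∃ x y : Fin n → F, (∀ j', j' ≠ i → x j' = y j') ∧
      Algebra.trace (ZMod p) F (c j * f x) ≠ Algebra.trace (ZMod p) F (c j * f y) := by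
  obtain ⟨x, y, hxy, hne⟩ := hrel
  have hcard : Nat.card F ≤ Nat.card (Fin (p ^ (ℓ - 1))) * Nat.card (ZMod p) := by
    rw [Nat.card_eq_fintype_card, hq, Nat.card_eq_fintype_card, Fintype.card_fin, Nat.card_zmod,
      ← pow_succ]
    exact Nat.pow_le_pow_right (Fact.out : p.Prime).pos (by omega)
  obtain ⟨j, hj⟩ :=
    Algebra.exists_trace_mul_ne_zero (ZMod p) hinj hc0 hcard (sub_ne_zero.mpr hne)
  refine ⟨j, x, y, hxy, fun h => hj ?_⟩
  rw [mul_sub, map_sub, h, sub_self]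
end

section
/- Let X be a random variable taking values in F_q with |E[e(X)]| ≥ ρ for some 0 ≤ ρ ≤ 1. Then there exists a ∈ F_q such that Pr[X = a] ≥ 1/q + ρ/q². -/
/-- The additive character `e(a) = exp(2πi·Tr(a)/p)` of a finite field of characteristic `p`. -/
noncomputable def ec (p : ℕ) {F : Type*} [Field F] [Algebra (ZMod p) F] (a : F) : ℂ :=
  Complex.exp (2 * Real.pi * Complex.I * ((Algebra.trace (ZMod p) F a).val : ℂ) / p)

/-!
Since `∑ₐ e(a) = 0` and `|e(a)| = 1`, subtracting the uniform distribution does not change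
`E[e(X)]`, so `ρ ≤ ∑ₐ |μ a - 1/q|`. The deviations `μ a - 1/q` sum to zero, hence their absolute
values sum to twice their positive parts, which is at most `2q · max_a (μ a - 1/q)`. This gives
some `a` with `μ a - 1/q ≥ ρ/(2q) ≥ ρ/q²`.
-/

open Finset

lemma sum_abs_lt_of_sum_eq_zero {ι : Type*} [Fintype ι] [Nonempty ι] {d : ι → ℝ}
    (hd : ∑ i, d i = 0) {c : ℝ} (hc : ∀ i, d i < c) :
    ∑ i, |d i| < 2 * Fintype.card ι * c := by
  have hc0 : 0 < c := by
    have := sum_lt_sum_of_nonempty univ_nonempty fun i _ ↦ hc i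
    simp only [hd, sum_const, card_univ, nsmul_eq_mul] at this
    exact pos_of_mul_pos_right this (Nat.cast_nonneg _)
  have habs (x : ℝ) : |x| = 2 * max x 0 - x := by
    rcases le_total 0 x with h | h
    · rw [abs_of_nonneg h, max_eq_left h]; ring
    · rw [abs_of_nonpos h, max_eq_right h]; ring
  calc ∑ i, |d i| = 2 * ∑ i, max (d i) 0 := by
        simp only [habs, sum_sub_distrib, hd, ← mul_sum, sub_zero]
    _ < 2 * ∑ _i : ι, c := by
        gcongr with i
        · exact univ_nonempty
        · exact max_lt (hc i) hc0
    _ = 2 * Fintype.card ι * c := by simp [mul_assoc]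

lemma norm_sum_mul_le_sum_abs_sub {ι : Type*} [Fintype ι] {χ : ι → ℂ}
    (hχ : ∀ i, ‖χ i‖ = 1) (hsum : ∑ i, χ i = 0) (μ : ι → ℝ) (c : ℝ) :
    ‖∑ i, (μ i : ℂ) * χ i‖ ≤ ∑ i, |μ i - c| := by
  have hshift : ∑ i, (μ i : ℂ) * χ i = ∑ i, ((μ i - c : ℝ) : ℂ) * χ i := by
    simp only [Complex.ofReal_sub, sub_mul, sum_sub_distrib, ← mul_sum, hsum, mul_zero, sub_zero]
  rw [hshift]
  refine (norm_sum_le _ _).trans_eq (sum_congr rfl fun i _ ↦ ?_)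
  rw [norm_mul, hχ, mul_one, Complex.norm_real, Real.norm_eq_abs]

section traceChar

variable (p : ℕ) [NeZero p] (F : Type*) [Field F] [Algebra (ZMod p) F]

noncomputable def traceChar : AddChar F ℂ :=
  ZMod.stdAddChar.compAddMonoidHom (Algebra.trace (ZMod p) F).toAddMonoidHom

variable {F}

lemma traceChar_apply (a : F) : traceChar p F a = ec p a := by
  change ZMod.stdAddChar (Algebra.trace (ZMod p) F a) = _
  rw [ZMod.stdAddChar_apply, ZMod.toCircle_apply, ec]

variable [Fintype F]

lemma norm_ec (a : F) : ‖ec p a‖ = 1 := by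
  rw [← traceChar_apply, AddChar.norm_apply]

variable [Fact p.Prime]

lemma traceChar_ne_one : traceChar p F ≠ 1 := by
  obtain ⟨a, ha⟩ := Algebra.trace_surjective (ZMod p) F 1
  refine AddChar.ne_one_iff.2 ⟨a, fun h ↦ one_ne_zero (ZMod.injective_stdAddChar (N := p) ?_)⟩
  change ZMod.stdAddChar (Algebra.trace (ZMod p) F a) = 1 at h
  rw [← ha, h, AddChar.map_zero_eq_one]

lemma sum_ec : ∑ a : F, ec p a = 0 := by
  simp only [← traceChar_apply, AddChar.sum_eq_zero_of_ne_one (traceChar_ne_one p (F := F))]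

end traceChar

theorem stmt_6_general (p : ℕ) [Fact p.Prime] {F : Type*} [Field F] [Fintype F]
    [Algebra (ZMod p) F]
    (μ : F → ℝ) (h1 : ∑ x, μ x = 1)
    (ρ : ℝ) (hρ0 : 0 ≤ ρ)
    (hcor : ρ ≤ ‖∑ x, (μ x : ℂ) * ec p x‖) :
    ∃ a : F, 1 / (Fintype.card F : ℝ) + ρ / (Fintype.card F : ℝ) ^ 2 ≤ μ a := by
  by_contra! hμ
  have hq : (2 : ℝ) ≤ Fintype.card F := mod_cast (Fintype.one_lt_card : 2 ≤ Fintype.card F)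
  set q : ℝ := (Fintype.card F : ℝ)
  have hcentered : ∑ x, (μ x - 1 / q) = 0 := by
    rw [sum_sub_distrib, h1, sum_const, card_univ, nsmul_eq_mul]
    field_simp
    ring
  have hlt := sum_abs_lt_of_sum_eq_zero hcentered (c := ρ / q ^ 2)
    fun x ↦ by linarith [hμ x]
  have hle := norm_sum_mul_le_sum_abs_sub (norm_ec p) (sum_ec p) μ (1 / q)
  have hbound : 2 * q * (ρ / q ^ 2) ≤ ρ := by
    rw [show 2 * q * (ρ / q ^ 2) = 2 / q * ρ by field_simp]
    exact mul_le_of_le_one_left hρ0 ((div_le_one (by positivity)).2 hq)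
  linarith

/-- If `X` is a random variable on `F_q` (distribution `μ`) with `|E[e(X)]| ≥ ρ`
for some `0 ≤ ρ ≤ 1`, then there exists `a ∈ F_q` with `Pr[X = a] ≥ 1/q + ρ/q²`. -/
theorem stmt_6 (p ℓ : ℕ) [Fact p.Prime] {F : Type*} [Field F] [Fintype F]
    [Algebra (ZMod p) F] (hq : Fintype.card F = p ^ ℓ)
    (μ : F → ℝ) (h0 : ∀ x, 0 ≤ μ x) (h1 : ∑ x, μ x = 1)
    (ρ : ℝ) (hρ0 : 0 ≤ ρ) (hρ1 : ρ ≤ 1)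
    (hcor : ρ ≤ ‖∑ x, (μ x : ℂ) * ec p x‖) :
    ∃ a : F, 1 / (Fintype.card F : ℝ) + ρ / (Fintype.card F : ℝ) ^ 2 ≤ μ a :=
  stmt_6_general p μ h1 ρ hρ0 hcor
end

section
/- For any subset D ⊆ [n] with |D| ≤ k, any α supported on D with α ≠ 0, and any m ≥ k, the probability over a uniformly random matrix A ∈ F_q^{m×n} that Aα = 1^m while Aβ ≠ 1^m for every β ∈ F_q^D \ {α} is at least (q^{m−k} − 1)/q^{2m−k}. -/
/-!
Conditioned on `Aα = 1`, the matrix `A` fails the uniqueness condition only if `Aγ = 0` for some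
nonzero `γ = β - α` supported on `D`; such a `γ` is then linearly independent of `α` (otherwise
`Aγ` would be a nonzero multiple of `1`). For independent `α, γ` the map `A ↦ (Aα, Aγ)` is
surjective, so `Pr[Aα = 1 ∧ Aγ = 0] = q^{-2m}`, while `Pr[Aα = 1] = q^{-m}`. A union bound over
the fewer than `q^k` candidates `γ` gives the probability at least
`q^{-m} - (q^k - 1) q^{-2m} ≥ (q^{m-k} - 1) / q^{2m-k}`.
-/

open Finset Matrix

theorem AddMonoidHom.card_fiber_mul_card_of_surjective {G H : Type*} [AddGroup G] [Fintype G]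
    [AddMonoid H] [Fintype H] [DecidableEq H] (f : G →+ H) (hf : Function.Surjective f) (y : H) :
    #{x | f x = y} * Fintype.card H = Fintype.card G := by
  calc #{x | f x = y} * Fintype.card H = ∑ z : H, #{x | f x = z} := by
        rw [sum_congr rfl fun z _ ↦ card_fiber_eq_of_mem_range f (hf z) (hf y), sum_const,
          card_univ, smul_eq_mul, mul_comm]
    _ = Fintype.card G := (card_eq_sum_card_fiberwise fun _ _ ↦ mem_univ _).symm

theorem Finset.card_mul_le_of_subset_union_biUnion {α β : Type*} [DecidableEq α]
    {G E : Finset α} {S : Finset β} {B : β → Finset α} {c N : ℕ}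
    (hcover : G ⊆ E ∪ S.biUnion B) (hB : ∀ γ ∈ S, #(B γ) * c ≤ N) :
    #G * c ≤ #E * c + #S * N := by
  calc #G * c ≤ (#E + ∑ γ ∈ S, #(B γ)) * c := by
        gcongr
        exact (card_le_card hcover).trans
          ((card_union_le _ _).trans (by gcongr; exact card_biUnion_le))
    _ = #E * c + ∑ γ ∈ S, #(B γ) * c := by rw [add_mul, sum_mul]
    _ ≤ #E * c + #S * N := by
        gcongr
        exact sum_le_card_nsmul S _ N hB

theorem Finset.card_filter_support_subset_le {ι M : Type*} [Fintype ι] [DecidableEq ι] [Zero M]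
    [Fintype M] (D : Finset ι) [DecidablePred fun β : ι → M ↦ ∀ i, β i ≠ 0 → i ∈ D] :
    #{β : ι → M | ∀ i, β i ≠ 0 → i ∈ D} ≤ Fintype.card M ^ #D := by
  calc #{β : ι → M | ∀ i, β i ≠ 0 → i ∈ D} ≤ #(univ : Finset (D → M)) :=
        card_le_card_of_injOn (fun β i ↦ β i) (fun _ _ ↦ mem_univ _) fun β hβ γ hγ h ↦ by
          ext i
          by_cases hi : i ∈ D
          · exact congrFun h ⟨i, hi⟩
          · simp only [coe_filter, mem_univ, true_and, Set.mem_ofPred_eq] at hβ hγ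
            rw [not_imp_comm.mp (hβ i) hi, not_imp_comm.mp (hγ i) hi]
    _ = Fintype.card M ^ #D := by simp

theorem Fintype.card_matrix {m n R : Type*} [Fintype m] [DecidableEq m] [Fintype n]
    [DecidableEq n] [Fintype R] :
    Fintype.card (Matrix m n R) = Fintype.card R ^ (Fintype.card m * Fintype.card n) := by
  rw [show Fintype.card (Matrix m n R) = Fintype.card (m → n → R) from rfl, Fintype.card_fun,
    Fintype.card_fun, ← pow_mul, mul_comm]

section LinearAlgebra

variable {K V W : Type*} [Field K] [AddCommGroup V] [Module K V] [AddCommGroup W] [Module K W]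

theorem LinearIndependent.exists_linearMap_apply_eq {ι : Type*} {v : ι → V}
    (hv : LinearIndependent K v) (w : ι → W) : ∃ g : V →ₗ[K] W, ∀ i, g (v i) = w i := by
  obtain ⟨g, hg⟩ := LinearMap.exists_extend ((Module.Basis.span hv).constr K w)
  refine ⟨g, fun i ↦ ?_⟩
  have := LinearMap.congr_fun hg (Module.Basis.span hv i)
  rwa [LinearMap.comp_apply, Module.Basis.constr_basis, Submodule.subtype_apply,
    Module.Basis.coe_span_apply] at this

theorem linearIndependent_pair_sub_of_apply_eq (f : V →ₗ[K] W) {x y : V} (hx : f x ≠ 0)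
    (hxy : f y = f x) (hne : y ≠ x) : LinearIndependent K ![x, y - x] := by
  refine LinearIndependent.pair_iff.mpr fun s t hst ↦ ?_
  obtain rfl : s = 0 := by simpa [hxy, hx] using congrArg f hst
  simpa [sub_ne_zero.mpr hne] using hst

end LinearAlgebra

namespace Matrix

theorem exists_linearIndependent_mulVec_eq_zero {K m n : Type*} [Field K] [Fintype n]
    [Nonempty m] {A : Matrix m n K} {D : Finset n} {α β : n → K} (hαD : ∀ i, α i ≠ 0 → i ∈ D)
    (hβD : ∀ i, β i ≠ 0 → i ∈ D) (hne : β ≠ α) (hα : A *ᵥ α = fun _ ↦ 1)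
    (hβ : A *ᵥ β = fun _ ↦ 1) :
    ∃ γ, (∀ i, γ i ≠ 0 → i ∈ D) ∧ LinearIndependent K ![α, γ] ∧ A *ᵥ γ = 0 := by
  have hγD (i) (hi : β i - α i ≠ 0) : i ∈ D := by
    by_contra hiD
    exact hi (by rw [not_imp_comm.mp (hβD i) hiD, not_imp_comm.mp (hαD i) hiD, sub_self])
  have hli := linearIndependent_pair_sub_of_apply_eq (mulVecLin A)
    (by rw [mulVecLin_apply, hα]; exact one_ne_zero) (by simp [hα, hβ]) hne
  exact ⟨β - α, hγD, hli, by rw [mulVec_sub, hα, hβ, sub_self]⟩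

variable {K : Type*} [Field K] [Fintype K] [DecidableEq K] {m n : Type*} [Fintype m]
  [DecidableEq m] [Fintype n] [DecidableEq n]

theorem card_filter_forall_mulVec_eq_mul {ι : Type*} [Fintype ι] {v : ι → n → K}
    (hv : LinearIndependent K v) (w : ι → m → K) :
    #{A : Matrix m n K | ∀ i, A *ᵥ v i = w i} *
        Fintype.card K ^ (Fintype.card m * Fintype.card ι) =
      Fintype.card K ^ (Fintype.card m * Fintype.card n) := by
  classical
  let f : Matrix m n K →+ (ι → m → K) :=
    AddMonoidHom.mk' (fun A i ↦ A *ᵥ v i) fun A B ↦ by ext; simp [add_mulVec]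
  have hf : Function.Surjective f := fun w ↦ by
    obtain ⟨g, hg⟩ := hv.exists_linearMap_apply_eq w
    exact ⟨LinearMap.toMatrix' g, funext fun i ↦ by simp [f, hg]⟩
  convert f.card_fiber_mul_card_of_surjective hf w using 3
  · simp [f, funext_iff]
  · rw [Fintype.card_fun, Fintype.card_fun, ← pow_mul]
  · exact Fintype.card_matrix.symm

theorem card_filter_mulVec_eq_mul {α : n → K} (hα : α ≠ 0) (w : m → K) :
    #{A : Matrix m n K | A *ᵥ α = w} * Fintype.card K ^ Fintype.card m =
      Fintype.card K ^ (Fintype.card m * Fintype.card n) := by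
  have hα' : LinearIndependent K ![α] := linearIndependent_unique_iff.mpr hα
  simpa [Fin.forall_fin_one] using card_filter_forall_mulVec_eq_mul hα' ![w]

theorem card_filter_mulVec_eq_and_mulVec_eq_mul {α γ : n → K} (h : LinearIndependent K ![α, γ])
    (w w' : m → K) :
    #{A : Matrix m n K | A *ᵥ α = w ∧ A *ᵥ γ = w'} * Fintype.card K ^ (2 * Fintype.card m) =
      Fintype.card K ^ (Fintype.card m * Fintype.card n) := by
  simpa [Fin.forall_fin_two, mul_comm] using card_filter_forall_mulVec_eq_mul h ![w, w']

end Matrix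

theorem pow_sub_one_div_pow_le_div {q g e s Q : ℝ} {k m : ℕ} (hq : 0 < q) (hQ : 0 < Q)
    (hkm : k ≤ m) (hg : g * q ^ m = Q) (hs : s + 1 ≤ q ^ k)
    (h : g * q ^ (2 * m) ≤ e * q ^ (2 * m) + s * Q) :
    (q ^ (m - k) - 1) / q ^ (2 * m - k) ≤ e / Q := by
  obtain ⟨d, rfl⟩ := Nat.exists_eq_add_of_le hkm
  rw [show k + d - k = d by omega, show 2 * (k + d) - k = k + 2 * d by omega,
    div_le_div_iff₀ (by positivity) hQ]
  have hgQ : g * q ^ (2 * (k + d)) = q ^ (k + d) * Q := by rw [← hg]; ring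
  have hsQ : (s + 1) * Q ≤ q ^ k * Q := mul_le_mul_of_nonneg_right hs hQ.le
  refine le_of_mul_le_mul_right ?_ (pow_pos hq k)
  calc (q ^ d - 1) * Q * q ^ k = q ^ (k + d) * Q - q ^ k * Q := by ring
    _ ≤ e * q ^ (2 * (k + d)) := by linarith
    _ = e * q ^ (k + 2 * d) * q ^ k := by ring

/-- For any `D ⊆ [n]` with `|D| ≤ k`, any nonzero `α` supported on `D`, and any
`m ≥ k`, the probability over uniform `A ∈ F_q^{m×n}` that `Aα = 1^m` while `Aβ ≠ 1^m` for
every `β ∈ F_q^D \ {α}` is at least `(q^{m−k} − 1)/q^{2m−k}`. -/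
theorem stmt_11 {F : Type*} [Field F] [Fintype F] [DecidableEq F] {n k m : ℕ}
    (hm : k ≤ m) (D : Finset (Fin n)) (hD : D.card ≤ k)
    (α : Fin n → F) (hα : α ≠ 0) (hsupp : ∀ i, α i ≠ 0 → i ∈ D) :
    ((Fintype.card F : ℝ) ^ (m - k) - 1) / (Fintype.card F : ℝ) ^ (2 * m - k) ≤
      ((Finset.univ.filter fun A : Matrix (Fin m) (Fin n) F =>
          A.mulVec α = (fun _ => 1) ∧
          ∀ β : Fin n → F, (∀ i, β i ≠ 0 → i ∈ D) → β ≠ α →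
            A.mulVec β ≠ fun _ => 1).card : ℝ) /
        (Fintype.card (Matrix (Fin m) (Fin n) F) : ℝ) := by
  classical
  obtain rfl | hm0 := Nat.eq_zero_or_pos m
  · obtain rfl : k = 0 := Nat.le_zero.mp hm
    simp only [Nat.sub_zero, mul_zero, pow_zero, sub_self, zero_div]
    positivity
  have : Nonempty (Fin m) := ⟨⟨0, hm0⟩⟩
  set q := Fintype.card F
  set E : Finset (Matrix (Fin m) (Fin n) F) := {A | A *ᵥ α = (fun _ => 1) ∧
    ∀ β : Fin n → F, (∀ i, β i ≠ 0 → i ∈ D) → β ≠ α → A *ᵥ β ≠ fun _ => 1}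
  let G : Finset (Matrix (Fin m) (Fin n) F) := {A | A *ᵥ α = fun _ => 1}
  let T : Finset (Fin n → F) := {β | ∀ i, β i ≠ 0 → i ∈ D}
  let S : Finset (Fin n → F) := {γ ∈ T | LinearIndependent F ![α, γ]}
  let B (γ : Fin n → F) : Finset (Matrix (Fin m) (Fin n) F) :=
    {A | A *ᵥ α = (fun _ => 1) ∧ A *ᵥ γ = 0}
  have hcover : G ⊆ E ∪ S.biUnion B := by
    intro A hA
    replace hA : A *ᵥ α = fun _ ↦ 1 := (mem_filter.mp hA).2
    by_cases hAE : A ∈ E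
    · exact mem_union_left _ hAE
    obtain ⟨β, hβD, hβα, hβ⟩ :
        ∃ β, (∀ i, β i ≠ 0 → i ∈ D) ∧ β ≠ α ∧ A *ᵥ β = fun _ => 1 := by
      simpa [E, hA] using hAE
    obtain ⟨γ, hγD, hγα, hγ⟩ := exists_linearIndependent_mulVec_eq_zero hsupp hβD hβα hA hβ
    exact mem_union_right _ (mem_biUnion.mpr ⟨γ, mem_filter.mpr ⟨mem_filter.mpr ⟨mem_univ _, hγD⟩,
      hγα⟩, mem_filter.mpr ⟨mem_univ _, hA, hγ⟩⟩)
  have hG : #G * q ^ m = q ^ (m * n) := by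
    simpa using card_filter_mulVec_eq_mul (m := Fin m) hα (fun _ ↦ 1)
  have hB (γ) (hγ : γ ∈ S) : #(B γ) * q ^ (2 * m) ≤ q ^ (m * n) := by
    simpa using (card_filter_mulVec_eq_and_mulVec_eq_mul (m := Fin m) (mem_filter.mp hγ).2
      (fun _ ↦ 1) 0).le
  have hS : #S < q ^ k :=
    calc #S < #T := card_lt_card (filter_ssubset.mpr ⟨0, by simp [T], fun h ↦ h.ne_zero 1 rfl⟩)
      _ ≤ q ^ #D := card_filter_support_subset_le D
      _ ≤ q ^ k := Nat.pow_le_pow_right Fintype.card_pos hD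
  rw [Fintype.card_matrix, Fintype.card_fin, Fintype.card_fin]
  push_cast
  exact pow_sub_one_div_pow_le_div (g := #G) (s := #S) (by positivity) (by positivity) hm
    (by exact_mod_cast hG) (by exact_mod_cast hS)
    (by exact_mod_cast card_mul_le_of_subset_union_biUnion hcover hB)
end

section
/- Let f : F_q^n → F_q, A ∈ F_q^{m×n}, a ∈ F_q. Suppose an example (x, b) is generated by sampling y uniformly from F_q^n and z uniformly from F_q^m and setting x = y − Aᵀz, b = f(y) − Σ_j z_j. Then for every fixed x ∈ F_q^n, the conditional expectation E[e(a·b) | x] equals f_A^a(x), the (a,A)-projection of f evaluated at x. -/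
/-- The linear function `χ_α(x) = Σ_i α_i x_i` over `F_q`. -/
def chi {F : Type*} [Field F] {n : ℕ} (α x : Fin n → F) : F := ∑ i, α i * x i

/-- The Fourier coefficient `ĝ(α) = E_x[e(g(x))·conj(e(χ_α(x)))]`. -/
noncomputable def fc (p : ℕ) {F : Type*} [Field F] [Fintype F] [Algebra (ZMod p) F] {n : ℕ}
    (g : (Fin n → F) → F) (α : Fin n → F) : ℂ :=
  (∑ x : Fin n → F, ec p (g x) * (starRingEnd ℂ) (ec p (chi α x))) /
    (Fintype.card (Fin n → F) : ℂ)

/-!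
Any nontrivial additive character can play the role of `e`. Expanding the indicator of
`Aα = a·1` by orthogonality of characters on `F_q^m`, and then summing `e(χ_α(x - y + Aᵀz))`
over all `α` by orthogonality on `F_q^n`, the projection collapses to
`q^{-m} Σ_z e(a·f(x + Aᵀz) - a·Σ_j z_j)`. This is the ratio on the left as well, since the
samples `(y, z)` with `y - Aᵀz = x` are exactly `(x + Aᵀz, z)`.
-/

open Matrix Finset

section FiberSum

variable {G H R : Type*} [AddGroup G] [Fintype G] [DecidableEq G] [Fintype H] [AddCommMonoid R]

theorem sum_ite_sub_eq (L : H → G) (x : G) (g : G × H → R) :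
    ∑ yz : G × H, (if yz.1 - L yz.2 = x then g yz else 0) = ∑ z, g (x + L z, z) := by
  rw [Fintype.sum_prod_type_right]
  refine Fintype.sum_congr _ _ fun z => ?_
  simp_rw [sub_eq_iff_eq_add]
  exact Fintype.sum_ite_eq' _ _

theorem card_filter_sub_eq (L : H → G) (x : G) :
    #{yz : G × H | yz.1 - L yz.2 = x} = Fintype.card H := by
  rw [card_filter, sum_ite_sub_eq L x fun _ => 1, sum_const, card_univ, smul_eq_mul, mul_one]

end FiberSum

namespace AddChar

variable {F ι κ : Type*} [Field F] [Fintype F] [DecidableEq F]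
  [Fintype ι] [DecidableEq ι] [Fintype κ] [DecidableEq κ]

section Domain

variable {R : Type*} [CommRing R] [IsDomain R] {ψ : AddChar F R}

theorem sum_dotProduct_eq_ite (hψ : ψ ≠ 1) (w : ι → F) :
    ∑ v : ι → F, ψ (v ⬝ᵥ w) = if w = 0 then (Fintype.card F : R) ^ Fintype.card ι else 0 := by
  split_ifs with hw
  · simp [hw]
  obtain ⟨i, hi⟩ := Function.ne_iff.mp hw
  obtain ⟨t, ht⟩ := ne_one_iff.mp hψ
  let dotW : (ι → F) →+ F := AddMonoidHom.mk' (· ⬝ᵥ w) fun u v => add_dotProduct u v w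
  refine sum_eq_zero_of_ne_one (ψ := ψ.compAddMonoidHom dotW)
    (ne_one_iff.mpr ⟨Pi.single i (t / w i), ?_⟩)
  simpa [dotW, div_mul_cancel₀ t hi] using ht

theorem card_pow_mul_sum_filter_mulVec_eq (hψ : ψ ≠ 1) (A : Matrix κ ι F) (c : κ → F)
    (w : ι → F) :
    (Fintype.card F : R) ^ Fintype.card κ * ∑ v with A *ᵥ v = c, ψ (v ⬝ᵥ w) =
      (Fintype.card F : R) ^ Fintype.card ι * ∑ z with Aᵀ *ᵥ z = -w, ψ (-(z ⬝ᵥ c)) := by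
  calc _ = ∑ v, ψ (v ⬝ᵥ w) * ∑ z, ψ (z ⬝ᵥ (A *ᵥ v - c)) := by
        rw [mul_sum, sum_filter]
        refine sum_congr rfl fun v _ => ?_
        rw [sum_dotProduct_eq_ite hψ]
        simp only [sub_eq_zero]
        split_ifs <;> ring
    _ = ∑ z, ψ (-(z ⬝ᵥ c)) * ∑ v, ψ (v ⬝ᵥ (w + Aᵀ *ᵥ z)) := by
        simp_rw [mul_sum]
        rw [sum_comm]
        refine sum_congr rfl fun z _ => sum_congr rfl fun v _ => ?_
        rw [← map_add_eq_mul, ← map_add_eq_mul, dotProduct_sub, dotProduct_add, dotProduct_mulVec,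
          mulVec_transpose, dotProduct_comm (z ᵥ* A)]
        abel_nf
    _ = _ := by
        rw [mul_sum, sum_filter]
        refine sum_congr rfl fun z _ => ?_
        rw [sum_dotProduct_eq_ite hψ]
        simp only [add_eq_zero_iff_eq_neg']
        split_ifs <;> ring

end Domain

section Field

variable {R : Type*} [Field R] [CharZero R] {ψ : AddChar F R}

theorem sum_filter_mulVec_fourier_mul_eq (hψ : ψ ≠ 1) (A : Matrix κ ι F) (c : κ → F)
    (g : (ι → F) → F) (x : ι → F) :
    ∑ v with A *ᵥ v = c,
        (∑ y, ψ (g y) * ψ (-(v ⬝ᵥ y))) / Fintype.card (ι → F) * ψ (v ⬝ᵥ x) =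
      (∑ z, ψ (g (x + Aᵀ *ᵥ z) - z ⬝ᵥ c)) / Fintype.card (κ → F) := by
  simp only [Fintype.card_fun, Nat.cast_pow]
  set q : R := (Fintype.card F : R)
  have hq : q ≠ 0 := Nat.cast_ne_zero.mpr Fintype.card_ne_zero
  have hcoset : ∀ y, ∑ v with A *ᵥ v = c, ψ (v ⬝ᵥ (x - y)) =
      q ^ Fintype.card ι / q ^ Fintype.card κ * ∑ z with y - Aᵀ *ᵥ z = x, ψ (-(z ⬝ᵥ c)) := by
    intro y
    rw [div_mul_eq_mul_div, eq_div_iff (pow_ne_zero _ hq), mul_comm,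
      card_pow_mul_sum_filter_mulVec_eq hψ, neg_sub]
    congr 2
    exact filter_congr fun z _ => eq_sub_iff_add_eq.trans (sub_eq_iff_eq_add'.trans eq_comm).symm
  calc _ = (∑ v with A *ᵥ v = c, ∑ y, ψ (g y) * ψ (v ⬝ᵥ (x - y))) / q ^ Fintype.card ι := by
        rw [sum_div]
        refine sum_congr rfl fun v _ => ?_
        rw [div_mul_eq_mul_div, sum_mul]
        congr 1
        refine sum_congr rfl fun y _ => ?_
        rw [mul_assoc, ← map_add_eq_mul, dotProduct_sub, neg_add_eq_sub]
    _ = (∑ y, ψ (g y) * ∑ v with A *ᵥ v = c, ψ (v ⬝ᵥ (x - y))) / q ^ Fintype.card ι := by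
        rw [sum_comm]
        simp_rw [mul_sum]
    _ = (∑ y, ψ (g y) * ∑ z with y - Aᵀ *ᵥ z = x, ψ (-(z ⬝ᵥ c))) / q ^ Fintype.card κ := by
        simp_rw [hcoset, ← mul_assoc, mul_comm _ (_ / _), mul_assoc, ← mul_sum]
        field_simp
    _ = (∑ yz : (ι → F) × (κ → F), if yz.1 - Aᵀ *ᵥ yz.2 = x then
          ψ (g yz.1) * ψ (-(yz.2 ⬝ᵥ c)) else 0) / q ^ Fintype.card κ := by
        simp_rw [mul_sum, Fintype.sum_prod_type, sum_filter]
    _ = _ := by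
        rw [sum_ite_sub_eq]
        simp_rw [← map_add_eq_mul, ← sub_eq_add_neg]

end Field

end AddChar

section TraceCharacter

variable (p : ℕ) [Fact p.Prime] (F : Type*) [Field F] [Algebra (ZMod p) F]

noncomputable def ecAddChar : AddChar F ℂ :=
  ZMod.stdAddChar.compAddMonoidHom (Algebra.trace (ZMod p) F).toAddMonoidHom

theorem coe_ecAddChar : ⇑(ecAddChar p F) = ec p := by
  funext c
  rw [ecAddChar, AddChar.compAddMonoidHom_apply, LinearMap.toAddMonoidHom_coe,
    ZMod.stdAddChar_apply, ZMod.toCircle_apply]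
  rfl

theorem ecAddChar_ne_one [Fintype F] : ecAddChar p F ≠ 1 := by
  have : CharP F p := charP_of_injective_algebraMap (algebraMap (ZMod p) F).injective p
  obtain rfl : ringChar F = p := ringChar.eq F p
  obtain ⟨b, hb⟩ := FiniteField.trace_to_zmod_nondegenerate F one_ne_zero
  refine AddChar.ne_one_iff.mpr ⟨b, fun h => hb ?_⟩
  rw [one_mul]
  exact ZMod.injective_stdAddChar (h.trans (AddChar.map_zero_eq_one _).symm)

end TraceCharacter

theorem chi_eq_dotProduct {F : Type*} [Field F] {n : ℕ} (α x : Fin n → F) :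
    chi α x = α ⬝ᵥ x :=
  rfl

theorem stmt_14_general (p : ℕ) [Fact p.Prime] {F : Type*} [Field F] [Fintype F] [DecidableEq F]
    [Algebra (ZMod p) F] {n m : ℕ}
    (f : (Fin n → F) → F) (A : Matrix (Fin m) (Fin n) F) (a : F) (x : Fin n → F) :
    (∑ yz : (Fin n → F) × (Fin m → F),
        if yz.1 - A.transpose.mulVec yz.2 = x then ec p (a * (f yz.1 - ∑ j, yz.2 j)) else 0) /
      ((Finset.univ.filter fun yz : (Fin n → F) × (Fin m → F) =>
          yz.1 - A.transpose.mulVec yz.2 = x).card : ℂ)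
      = ∑ α ∈ Finset.univ.filter (fun α : Fin n → F => A.mulVec α = fun _ => a),
          fc p (fun y => a * f y) α * ec p (chi α x) := by
  rw [sum_ite_sub_eq, card_filter_sub_eq]
  simp only [fc, chi_eq_dotProduct, ← coe_ecAddChar p F, ← AddChar.map_neg_eq_conj]
  rw [AddChar.sum_filter_mulVec_fourier_mul_eq (ecAddChar_ne_one p F)]
  refine congrArg (· / _) (sum_congr rfl fun z _ => congrArg _ ?_)
  simp only [dotProduct, mul_sub, mul_sum, mul_comm]

/-- An example `(x, b)` is generated by sampling uniform `y ∈ F_q^n`,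
`z ∈ F_q^m` and setting `x = y − Aᵀz`, `b = f(y) − Σ_j z_j`. For each fixed `x`, the
conditional expectation `E[e(a·b) | x]` (expressed as a ratio of sums over the joint sample
space `(y, z)`) equals the `(a,A)`-projection
`f_A^a(x) = Σ_{α : Aα = a·1^m} (af)^̂(α)·e(χ_α(x))`. -/
theorem stmt_14 (p ℓ : ℕ) [Fact p.Prime] {F : Type*} [Field F] [Fintype F] [DecidableEq F]
    [Algebra (ZMod p) F] (hq : Fintype.card F = p ^ ℓ) {n m : ℕ}
    (f : (Fin n → F) → F) (A : Matrix (Fin m) (Fin n) F) (a : F) (x : Fin n → F) :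
    (∑ yz : (Fin n → F) × (Fin m → F),
        if yz.1 - A.transpose.mulVec yz.2 = x then ec p (a * (f yz.1 - ∑ j, yz.2 j)) else 0) /
      ((Finset.univ.filter fun yz : (Fin n → F) × (Fin m → F) =>
          yz.1 - A.transpose.mulVec yz.2 = x).card : ℂ)
      = ∑ α ∈ Finset.univ.filter (fun α : Fin n → F => A.mulVec α = fun _ => a),
          fc p (fun y => a * f y) α * ec p (chi α x) :=
  stmt_14_general p f A a x
end

section
/- Let a ∈ F_q, μ ∈ [0,1], and X, Y random variables in F_q with Pr[X=a, Y=a] ≥ 1/q² + μ and Pr[X=a] = Pr[Y=a] = 1/q. Define the randomized binarization B(Z) ∈ {±1}: B(Z) = 1 if Z = a; otherwise B(Z) = −1 with probability p_h = q/(2(q−1)) and B(Z) = 1 with probability 1 − p_h, with independent coin flips for X and Y. Then Pr[B(X)·B(Y) = 1] ≥ 1/2 + 2·p_h²·μ. -/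
/-!
Averaging out the coins first: `B(Z)` is `±1`-valued, so `Pr[B(X) B(Y) = 1] = (1 + E[B(X) B(Y)]) / 2`,
and given `(X, Y)` the two coins are independent, with `E[B(Z) | Z] = (q·[Z = a] − 1) / (q − 1)`.
Hence `E[B(X) B(Y)] = (q² Pr[X = a, Y = a] − 1) / (q − 1)²` by the marginal conditions, which is
at least `q² μ / (q − 1)² = 4 p_h² μ`.
-/

open Finset

def binarize {α : Type*} [DecidableEq α] (a z : α) (c : Bool) : ℤ :=
  if z = a then 1 else if c then -1 else 1

def coinWeight (p : ℝ) (c : Bool) : ℝ := if c then p else 1 - p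

lemma binarize_eq_one_or_neg_one {α : Type*} [DecidableEq α] (a z : α) (c : Bool) :
    binarize a z c = 1 ∨ binarize a z c = -1 := by
  unfold binarize
  split_ifs <;> simp

lemma coinWeight_true_add_coinWeight_false (p : ℝ) : coinWeight p true + coinWeight p false = 1 := by
  simp [coinWeight]

lemma sum_coinWeight_mul_binarize {α : Type*} [DecidableEq α] (a z : α) {q : ℝ} (hq : q ≠ 1) :
    ∑ c, coinWeight (q / (2 * (q - 1))) c * binarize a z c =
      ((if z = a then q else 0) - 1) / (q - 1) := by
  have : q - 1 ≠ 0 := sub_ne_zero.2 hq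
  by_cases hz : z = a
  · simp [hz, binarize, coinWeight, div_self this]
  · simp only [binarize, coinWeight, hz, Fintype.sum_bool, if_false, if_true, Bool.false_eq_true]
    push_cast
    field_simp
    ring

lemma ite_mul_eq_one_eq_half {x y : ℤ} (hx : x = 1 ∨ x = -1) (hy : y = 1 ∨ y = -1) :
    (if x * y = 1 then 1 else 0 : ℝ) = (1 + x * y) / 2 := by
  rcases hx with rfl | rfl <;> rcases hy with rfl | rfl <;> norm_num

lemma sum_bool_bool_mul_ite_mul_eq_one (r : ℝ) {w : Bool → ℝ} (hw : w true + w false = 1)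
    {u v : Bool → ℤ} (hu : ∀ c, u c = 1 ∨ u c = -1) (hv : ∀ c, v c = 1 ∨ v c = -1) :
    ∑ c₁, ∑ c₂, r * w c₁ * w c₂ * (if u c₁ * v c₂ = 1 then 1 else 0 : ℝ) =
      r * ((1 + (∑ c, w c * u c) * (∑ c, w c * v c)) / 2) := by
  simp only [ite_mul_eq_one_eq_half (hu _) (hv _), Fintype.sum_bool]
  rw [eq_sub_of_add_eq' hw]
  ring

lemma sum_mul_ite_sub_one_mul_ite_sub_one {α β : Type*} [Fintype α] [Fintype β]
    [DecidableEq α] [DecidableEq β] (π : α × β → ℝ) (a : α) (b : β) (x y : ℝ) :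
    ∑ z, π z * ((if z.1 = a then x else 0) - 1) * ((if z.2 = b then y else 0) - 1) =
      x * y * π (a, b) - x * ∑ j, π (a, j) - y * ∑ i, π (i, b) + ∑ z, π z := by
  have expand : ∀ z : α × β,
      π z * ((if z.1 = a then x else 0) - 1) * ((if z.2 = b then y else 0) - 1) =
        (if z = (a, b) then x * y * π z else 0) - (if z.1 = a then x * π z else 0)
          - (if z.2 = b then y * π z else 0) + π z := by
    rintro ⟨i, j⟩
    by_cases hi : i = a <;> by_cases hj : j = b <;> simp [hi, hj] <;> ring
  have row : ∑ z : α × β, (if z.1 = a then x * π z else 0) = x * ∑ j, π (a, j) := by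
    rw [Fintype.sum_prod_type, sum_eq_single a (fun i _ hi => by simp [hi]) (by simp)]
    simp [mul_sum]
  have col : ∑ z : α × β, (if z.2 = b then y * π z else 0) = y * ∑ i, π (i, b) := by
    simp [Fintype.sum_prod_type, mul_sum]
  rw [sum_congr rfl fun z _ => expand z, sum_add_distrib, sum_sub_distrib, sum_sub_distrib,
    sum_ite_eq' univ (a, b) (fun z => x * y * π z), if_pos (mem_univ _), row, col]

lemma sum_binarize_agreement {α : Type*} [Fintype α] [DecidableEq α] (a : α) (π : α × α → ℝ)
    (h1 : ∑ z, π z = 1) {q : ℝ} (hq0 : q ≠ 0) (hq1 : q ≠ 1)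
    (hXa : ∑ y, π (a, y) = 1 / q) (hYa : ∑ x, π (x, a) = 1 / q) :
    ∑ z, ∑ c₁, ∑ c₂, π z * coinWeight (q / (2 * (q - 1))) c₁ * coinWeight (q / (2 * (q - 1))) c₂ *
        (if binarize a z.1 c₁ * binarize a z.2 c₂ = 1 then 1 else 0) =
      1 / 2 + (q ^ 2 * π (a, a) - 1) / (2 * (q - 1) ^ 2) := by
  have hq1' : q - 1 ≠ 0 := sub_ne_zero.2 hq1
  have average_coins : ∀ z : α × α,
      ∑ c₁, ∑ c₂, π z * coinWeight (q / (2 * (q - 1))) c₁ * coinWeight (q / (2 * (q - 1))) c₂ *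
        (if binarize a z.1 c₁ * binarize a z.2 c₂ = 1 then 1 else 0) =
      π z / 2 + π z * ((if z.1 = a then q else 0) - 1) * ((if z.2 = a then q else 0) - 1) /
        (2 * (q - 1) ^ 2) := by
    intro z
    rw [sum_bool_bool_mul_ite_mul_eq_one _ (coinWeight_true_add_coinWeight_false _)
      (binarize_eq_one_or_neg_one a z.1) (binarize_eq_one_or_neg_one a z.2),
      sum_coinWeight_mul_binarize a _ hq1, sum_coinWeight_mul_binarize a _ hq1]
    field_simp
  rw [sum_congr rfl fun z _ => average_coins z, sum_add_distrib, ← sum_div, ← sum_div, h1,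
    sum_mul_ite_sub_one_mul_ite_sub_one, hXa, hYa, h1]
  field_simp
  ring

theorem stmt_17_general {F : Type*} [Field F] [Fintype F] [DecidableEq F]
    (a : F) (π : F × F → ℝ) (h1 : ∑ z, π z = 1)
    (μ : ℝ)
    (hXa : ∑ y : F, π (a, y) = 1 / (Fintype.card F : ℝ))
    (hYa : ∑ x : F, π (x, a) = 1 / (Fintype.card F : ℝ))
    (hjoint : 1 / (Fintype.card F : ℝ) ^ 2 + μ ≤ π (a, a)) :
    let q : ℝ := Fintype.card F
    let ph : ℝ := q / (2 * (q - 1))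
    let B : F → Bool → ℤ := fun z c => if z = a then 1 else if c then -1 else 1
    let w : Bool → ℝ := fun c => if c then ph else 1 - ph
    1 / 2 + 2 * ph ^ 2 * μ ≤
      ∑ z : F × F, ∑ c₁ : Bool, ∑ c₂ : Bool,
        π z * w c₁ * w c₂ * (if B z.1 c₁ * B z.2 c₂ = 1 then 1 else 0) := by
  intro q ph B w
  have hq : 2 ≤ q := by
    show (2 : ℝ) ≤ Fintype.card F
    exact_mod_cast Fintype.one_lt_card (α := F)
  have hq0 : q ≠ 0 := by positivity
  have hq1 : q - 1 ≠ 0 := by linarith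
  have hjoint' : q ^ 2 * μ ≤ q ^ 2 * π (a, a) - 1 := by
    have := mul_le_mul_of_nonneg_left hjoint (sq_nonneg q)
    rw [mul_add, mul_one_div_cancel (pow_ne_zero 2 hq0)] at this
    linarith
  calc 1 / 2 + 2 * ph ^ 2 * μ = 1 / 2 + q ^ 2 * μ / (2 * (q - 1) ^ 2) := by
        simp only [ph]
        field_simp
    _ ≤ 1 / 2 + (q ^ 2 * π (a, a) - 1) / (2 * (q - 1) ^ 2) := by gcongr
    _ = _ := (sum_binarize_agreement a π h1 hq0 (by linarith) hXa hYa).symm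

/-- Let `a ∈ F_q`, `μ ∈ [0,1]`, and `(X, Y)` random variables in `F_q` with
joint distribution `π` satisfying `Pr[X=a, Y=a] ≥ 1/q² + μ` and `Pr[X=a] = Pr[Y=a] = 1/q`.
Binarize by `B(Z) = 1` if `Z = a`, else `B(Z) = −1` with probability `p_h = q/(2(q−1))` and
`B(Z) = 1` otherwise, with coins independent of each other and of `(X, Y)`. Then
`Pr[B(X)·B(Y) = 1] ≥ 1/2 + 2·p_h²·μ`. -/
theorem stmt_17 {F : Type*} [Field F] [Fintype F] [DecidableEq F]
    (a : F) (π : F × F → ℝ) (h0 : ∀ z, 0 ≤ π z) (h1 : ∑ z, π z = 1)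
    (μ : ℝ) (hμ0 : 0 ≤ μ) (hμ1 : μ ≤ 1)
    (hXa : ∑ y : F, π (a, y) = 1 / (Fintype.card F : ℝ))
    (hYa : ∑ x : F, π (x, a) = 1 / (Fintype.card F : ℝ))
    (hjoint : 1 / (Fintype.card F : ℝ) ^ 2 + μ ≤ π (a, a)) :
    let q : ℝ := Fintype.card F
    let ph : ℝ := q / (2 * (q - 1))
    let B : F → Bool → ℤ := fun z c => if z = a then 1 else if c then -1 else 1
    let w : Bool → ℝ := fun c => if c then ph else 1 - ph
    1 / 2 + 2 * ph ^ 2 * μ ≤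
      ∑ z : F × F, ∑ c₁ : Bool, ∑ c₂ : Bool,
        π z * w c₁ * w c₂ * (if B z.1 c₁ * B z.2 c₂ = 1 then 1 else 0) :=
  stmt_17_general a π h1 μ hXa hYa hjoint
end
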